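/- Let n ≥ 2, T > 0, β > 0, and for each s ∈ Fin n let B_s : ℝ → ℝ be continuous and strictly decreasing (in the location variable h_s). Then there exists a unique h* in the simplex {h | ∀ s, h_s > 0, ∑_s h_s = T} satisfying the fixed-point system h*_s = T · exp(β B_s(h*_s)) / (∑_j exp(β B_j(h*_j))) for all s. -/
import Mathlib


open Real Finset Filter

theorem location_equilibrium_exists_unique
    (n : ℕ) (hn : 2 ≤ n) (T β : ℝ) (hT : 0 < T) (hβ : 0 < β)
    (B : Fin n → ℝ → ℝ)
    (hBcont : ∀ s, Continuous (B s))
    (hBanti : ∀ s, StrictAnti (B s)) :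
    ∃! h : Fin n → ℝ,
      (∀ s, 0 < h s) ∧ (∑ s, h s = T) ∧
        ∀ s, h s = T * Real.exp (β * B s (h s)) / ∑ j, Real.exp (β * B j (h j)) := by
  haveI : Nonempty (Fin n) := Fin.pos_iff_nonempty.mp (by omega)
  have hne : (univ : Finset (Fin n)).Nonempty := univ_nonempty
  set g : Fin n → ℝ → ℝ := fun s x => x - β * B s (Real.exp x) with hgdef
  have hgmono : ∀ s, StrictMono (g s) := by
    intro s x y hxy
    have h1 : B s (Real.exp y) < B s (Real.exp x) :=
      hBanti s (Real.exp_lt_exp.mpr hxy)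
    have h2 : β * B s (Real.exp y) < β * B s (Real.exp x) :=
      mul_lt_mul_of_pos_left h1 hβ
    simp only [hgdef]
    linarith
  have hgcont : ∀ s, Continuous (g s) := fun s =>
    continuous_id.sub (continuous_const.mul ((hBcont s).comp Real.continuous_exp))
  have hgtop : ∀ s, Tendsto (g s) atTop atTop := by
    intro s
    have hb : Tendsto (fun x : ℝ => x - β * B s 1) atTop atTop := by
      simpa [sub_eq_add_neg] using
        tendsto_atTop_add_const_right atTop (-(β * B s 1)) tendsto_id
    refine tendsto_atTop_mono' atTop ?_ hb
    filter_upwards [eventually_ge_atTop (0:ℝ)] with x hx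
    have h1 : (1:ℝ) ≤ Real.exp x := Real.one_le_exp hx
    have h2 : B s (Real.exp x) ≤ B s 1 := (hBanti s).antitone h1
    have h3 : β * B s (Real.exp x) ≤ β * B s 1 :=
      mul_le_mul_of_nonneg_left h2 hβ.le
    simp only [hgdef]
    linarith
  have hgbot : ∀ s, Tendsto (g s) atBot atBot := by
    intro s
    have hb : Tendsto (fun x : ℝ => x - β * B s 1) atBot atBot := by
      simpa [sub_eq_add_neg] using
        tendsto_atBot_add_const_right atBot (-(β * B s 1)) tendsto_id
    refine tendsto_atBot_mono' atBot ?_ hb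
    filter_upwards [eventually_le_atBot (0:ℝ)] with x hx
    have h1 : Real.exp x ≤ 1 := Real.exp_le_one_iff.mpr hx
    have h2 : B s 1 ≤ B s (Real.exp x) := (hBanti s).antitone h1
    have h3 : β * B s 1 ≤ β * B s (Real.exp x) :=
      mul_le_mul_of_nonneg_left h2 hβ.le
    simp only [hgdef]
    linarith
  have hgsurj : ∀ s, Function.Surjective (g s) := fun s =>
    (hgcont s).surjective (hgtop s) (hgbot s)
  set e : Fin n → (ℝ ≃o ℝ) := fun s =>
    StrictMono.orderIsoOfSurjective (g s) (hgmono s) (hgsurj s) with hedef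
  have he_apply : ∀ s x, e s x = g s x := fun s x => rfl
  have he_symm : ∀ s c, g s ((e s).symm c) = c := fun s c => (e s).apply_symm_apply c
  set S : ℝ → ℝ := fun c => ∑ s, Real.exp ((e s).symm c) with hSdef
  have hScont : Continuous S := by
    apply continuous_finset_sum
    intro s _
    exact Real.continuous_exp.comp (e s).symm.continuous
  have hn0 : (0:ℝ) < n := by positivity
  set c1 : ℝ := univ.inf' hne (fun s => g s (Real.log (T / n))) with hc1
  set c2 : ℝ := univ.sup' hne (fun s => g s (Real.log T)) with hc2
  have hSc1 : S c1 ≤ T := by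
    have hterm : ∀ s : Fin n, Real.exp ((e s).symm c1) ≤ T / n := by
      intro s
      have h1 : c1 ≤ g s (Real.log (T / n)) :=
        inf'_le (fun s => g s (Real.log (T / n))) (mem_univ s)
      have h2 : (e s).symm c1 ≤ Real.log (T / n) := by
        have := (e s).symm.monotone h1
        rwa [← he_apply, (e s).symm_apply_apply] at this
      calc Real.exp ((e s).symm c1) ≤ Real.exp (Real.log (T / n)) :=
            Real.exp_le_exp.mpr h2
        _ = T / n := Real.exp_log (by positivity)
    calc S c1 ≤ ∑ _s : Fin n, T / n := Finset.sum_le_sum (fun s _ => hterm s)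
      _ = n * (T / n) := by simp [mul_comm]
      _ = T := by field_simp
  have hSc2 : T ≤ S c2 := by
    have hterm : ∀ s : Fin n, T ≤ Real.exp ((e s).symm c2) := by
      intro s
      have h1 : g s (Real.log T) ≤ c2 :=
        Finset.le_sup' (fun s => g s (Real.log T)) (mem_univ s)
      have h2 : Real.log T ≤ (e s).symm c2 := by
        have := (e s).symm.monotone h1
        rwa [← he_apply, (e s).symm_apply_apply] at this
      calc T = Real.exp (Real.log T) := (Real.exp_log hT).symm
        _ ≤ Real.exp ((e s).symm c2) := Real.exp_le_exp.mpr h2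
    calc T = T * 1 := by ring
      _ ≤ T * n := by
          have : (1:ℝ) ≤ n := by exact_mod_cast Nat.one_le_of_lt hn
          nlinarith
      _ = ∑ _s : Fin n, T := by simp [mul_comm]
      _ ≤ S c2 := Finset.sum_le_sum (fun s _ => hterm s)
  obtain ⟨c, _, hc⟩ : ∃ c ∈ Set.uIcc c1 c2, S c = T := by
    have := intermediate_value_uIcc (a := c1) (b := c2) hScont.continuousOn
    have hT' : T ∈ Set.uIcc (S c1) (S c2) := Set.mem_uIcc.mpr (Or.inl ⟨hSc1, hSc2⟩)
    obtain ⟨c, hc1, hc2⟩ := this hT'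
    exact ⟨c, hc1, hc2⟩
  set h : Fin n → ℝ := fun s => Real.exp ((e s).symm c) with hhdef
  have hpos : ∀ s, 0 < h s := fun s => Real.exp_pos _
  have hsum : ∑ s, h s = T := hc
  have hlog : ∀ s, Real.log (h s) = (e s).symm c := fun s => Real.log_exp _
  have hkey : ∀ s, h s = Real.exp c * Real.exp (β * B s (h s)) := by
    intro s
    have h1 := he_symm s c
    simp only [hgdef] at h1
    rw [show Real.exp ((e s).symm c) = h s from rfl] at h1
    have h2 : (e s).symm c = c + β * B s (h s) := by linarith
    conv_lhs => rw [show h s = Real.exp ((e s).symm c) from rfl]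
    rw [h2, Real.exp_add]
  have hkey' : ∀ s, Real.exp (β * B s (h s)) = h s / Real.exp c := by
    intro s
    rw [eq_div_iff (Real.exp_ne_zero c)]
    conv_rhs => rw [hkey s]
    ring
  have hZ : (∑ j, Real.exp (β * B j (h j))) = T / Real.exp c := by
    rw [Finset.sum_congr rfl (fun j _ => hkey' j), ← Finset.sum_div, hsum]
  have hfix : ∀ s, h s = T * Real.exp (β * B s (h s)) / ∑ j, Real.exp (β * B j (h j)) := by
    intro s
    rw [hZ]
    conv_lhs => rw [hkey s]
    have he0 : Real.exp c ≠ 0 := Real.exp_ne_zero c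
    field_simp
  refine ⟨h, ⟨hpos, hsum, hfix⟩, ?_⟩
  rintro h' ⟨hpos', hsum', hfix'⟩
  have hZ'pos : 0 < ∑ j, Real.exp (β * B j (h' j)) :=
    Finset.sum_pos (fun j _ => Real.exp_pos _) hne
  set c' : ℝ := Real.log T - Real.log (∑ j, Real.exp (β * B j (h' j))) with hc'
  have hg' : ∀ s, g s (Real.log (h' s)) = c' := by
    intro s
    have h1 : Real.log (h' s) = Real.log T + β * B s (h' s)
        - Real.log (∑ j, Real.exp (β * B j (h' j))) := by
      conv_lhs => rw [hfix' s]
      rw [Real.log_div (by positivity) (ne_of_gt hZ'pos),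
        Real.log_mul (ne_of_gt hT) (Real.exp_ne_zero _), Real.log_exp]
    simp only [hgdef, Real.exp_log (hpos' s)]
    rw [h1, hc']
    ring
  have hgh : ∀ s, g s (Real.log (h s)) = c := by
    intro s
    rw [hlog s]
    exact he_symm s c
  rcases lt_trichotomy c' c with hlt | heq | hgt
  · exfalso
    have hall : ∀ s, h' s < h s := by
      intro s
      have hlt2 : g s (Real.log (h' s)) < g s (Real.log (h s)) := by
        rw [hg' s, hgh s]; exact hlt
      have := (hgmono s).lt_iff_lt.mp hlt2
      calc h' s = Real.exp (Real.log (h' s)) := (Real.exp_log (hpos' s)).symm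
        _ < Real.exp (Real.log (h s)) := Real.exp_lt_exp.mpr this
        _ = h s := Real.exp_log (hpos s)
    have : (∑ s, h' s) < ∑ s, h s :=
      Finset.sum_lt_sum_of_nonempty hne (fun s _ => hall s)
    rw [hsum, hsum'] at this
    exact lt_irrefl T this
  · funext s
    have : Real.log (h' s) = Real.log (h s) :=
      (hgmono s).injective (by rw [hg' s, hgh s, heq])
    calc h' s = Real.exp (Real.log (h' s)) := (Real.exp_log (hpos' s)).symm
      _ = Real.exp (Real.log (h s)) := by rw [this]
      _ = h s := Real.exp_log (hpos s)
  · exfalso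
    have hall : ∀ s, h s < h' s := by
      intro s
      have hlt2 : g s (Real.log (h s)) < g s (Real.log (h' s)) := by
        rw [hg' s, hgh s]; exact hgt
      have := (hgmono s).lt_iff_lt.mp hlt2
      calc h s = Real.exp (Real.log (h s)) := (Real.exp_log (hpos s)).symm
        _ < Real.exp (Real.log (h' s)) := Real.exp_lt_exp.mpr this
        _ = h' s := Real.exp_log (hpos' s)
    have : (∑ s, h s) < ∑ s, h' s :=
      Finset.sum_lt_sum_of_nonempty hne (fun s _ => hall s)
    rw [hsum, hsum'] at this
    exact lt_irrefl T this
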